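/- Let a : ℕ → α be a sequence in the class 𝒞, let f : α × α × α × α ≃ β be a bijection, and let b : ℕ → β be the sequence defined by b(n) = f(a(4n), a(4n+1), a(4n+2), a(4n+3)). Then for every n ∈ ℕ, the palindromic length of the prefix of b of length n equals the palindromic length of the prefix of a of length 4n, i.e. P_b(n) = P_a(4n). -/

import Mathlib

/-- Membership in the class 𝒞: there exist a letter `c`, bijections `f n`,
and words `w n` with `w 0 = [c]`,
`w (n+1) = w n ++ f n (w n) ++ f n (w n) ++ w n`, `f n (w n) ≠ w n`,
and `w n` is the prefix of `a` of length `4 ^ n`. -/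
def InC {α : Type*} (a : ℕ → α) : Prop :=
  ∃ (c : α) (f : ℕ → α ≃ α) (w : ℕ → List α),
    w 0 = [c] ∧
    (∀ n, w (n + 1) = w n ++ (w n).map (f n) ++ (w n).map (f n) ++ w n) ∧
    (∀ n, (w n).map (f n) ≠ w n) ∧
    (∀ n, w n = (List.range (4 ^ n)).map a)

/-- The factor `a(x) a(x+1) ⋯ a(x+y-1)` of the sequence `a`. -/
def factor {α : Type*} (a : ℕ → α) (x y : ℕ) : List α :=
  (List.range y).map (fun i => a (x + i))

/-- The prefix of `a` of length `n`. -/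
def prefixWord {α : Type*} (a : ℕ → α) (n : ℕ) : List α :=
  factor a 0 n

/-- The palindromic length of a finite word: the least number of palindromes
whose concatenation is the word (0 for the empty word). -/
noncomputable def palLen {α : Type*} (w : List α) : ℕ :=
  sInf {k | ∃ ps : List (List α),
    ps.length = k ∧ (∀ p ∈ ps, p.Palindrome) ∧ ps.flatten = w}

/-- `P a n` is the palindromic length of the prefix of `a` of length `n`. -/
noncomputable def P {α : Type*} (a : ℕ → α) (n : ℕ) : ℕ :=
  palLen (prefixWord a n)

/-- The factor of length `y` at position `x` is embedded into the center of the
factor of length `4 * r` at position `4 * z`. -/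
def EmbedCenter (x y z r : ℕ) : Prop :=
  4 * z ≤ x ∧ x + y ≤ 4 * z + 4 * r ∧ x - 4 * z = (4 * z + 4 * r) - (x + y)

/-- The Thue–Morse sequence: `true` iff the number of ones in the binary
expansion is odd. -/
def thueMorse (n : ℕ) : Bool :=
  (Nat.digits 2 n).count 1 % 2 == 1

/-!
A sequence of `𝒞` is a concatenation of blocks `x y y x` with `x ≠ y`: this holds for
`w₁ = c f₀(c) f₀(c) c` and is preserved by `w ↦ w f(w) f(w) w`, and `b` reads `a` block by block.
Replacing each letter of `b` by its block turns a palindromic factorization of the prefix of `b`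
of length `n` into one of the prefix of `a` of length `4n`, so `P_a(4n) ≤ P_b(n)`.

Conversely, in such a sequence two adjacent letters can only be equal at an odd position. Hence a
palindrome of length at least 4 has even length and an even centre, and reflection about that
centre maps blocks onto blocks. Such a palindrome can therefore be shrunk or stretched by at most
two letters at each end into a palindrome bounded by block boundaries, i.e. into a palindrome of
`b`. Going through a palindromic factorization of the prefix of `a` of length `4n` while keeping
every cut within distance 2 of a block boundary yields a factorization of the prefix of `b` of
length `n` with no more factors.
-/

section

variable {α β : Type*}

section PalLen

theorem exists_palindromes_length_eq_palLen (w : List α) :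
    ∃ ps : List (List α), ps.length = palLen w ∧ (∀ p ∈ ps, p.Palindrome) ∧ ps.flatten = w :=
  Nat.sInf_mem (s := {k | ∃ ps : List (List α),
      ps.length = k ∧ (∀ p ∈ ps, p.Palindrome) ∧ ps.flatten = w})
    ⟨w.length, w.map ([·]), by simp, by simp [List.Palindrome.singleton],
      by induction w <;> simp [*]⟩

theorem palLen_flatten_le (ps : List (List α)) (hps : ∀ p ∈ ps, p.Palindrome) :
    palLen ps.flatten ≤ ps.length :=
  Nat.sInf_le ⟨ps, rfl, hps, rfl⟩

theorem palLen_append_le_succ (u : List α) {p : List α} (hp : p.Palindrome) :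
    palLen (u ++ p) ≤ palLen u + 1 := by
  obtain ⟨ps, hlen, hps, rfl⟩ := exists_palindromes_length_eq_palLen u
  have := palLen_flatten_le (ps ++ [p]) <| by
    simp only [List.mem_append, List.mem_singleton]
    rintro q (hq | rfl)
    exacts [hps q hq, hp]
  simpa [hlen] using this

theorem List.Palindrome.flatMap {l : List β} (hl : l.Palindrome) {E : β → List α}
    (hE : ∀ s, (E s).Palindrome) : (l.flatMap E).Palindrome := by
  refine .of_reverse_eq ?_
  rw [List.reverse_flatMap, hl.reverse_eq]
  exact List.flatMap_congr fun s _ => (hE s).reverse_eq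

theorem palLen_flatMap_le (E : β → List α) (hE : ∀ s, (E s).Palindrome) (l : List β) :
    palLen (l.flatMap E) ≤ palLen l := by
  obtain ⟨ps, hlen, hps, rfl⟩ := exists_palindromes_length_eq_palLen l
  have hflat : (ps.map (List.flatMap E)).flatten = ps.flatten.flatMap E := by
    rw [List.flatten_eq_flatMap, List.flatMap_map, List.flatten_eq_flatMap, List.flatMap_assoc]
    rfl
  have := palLen_flatten_le (ps.map (List.flatMap E))
    (by simpa using fun p hp => (hps p hp).flatMap hE)
  rwa [hflat, List.length_map, hlen] at this

end PalLen

section Factor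

variable (a : ℕ → α)

@[simp]
theorem length_factor (x y : ℕ) : (factor a x y).length = y := by
  simp [factor]

theorem factor_add (x y z : ℕ) : factor a x (y + z) = factor a x y ++ factor a (x + y) z := by
  simp [factor, List.range_add, Nat.add_assoc]

theorem factor_eq_of_append_eq {u v : List α} {x L : ℕ} (h : u ++ v = factor a x L) :
    u = factor a x u.length ∧ v = factor a (x + u.length) v.length := by
  have hL : L = u.length + v.length := by simpa using (congrArg List.length h).symm
  rw [hL, factor_add] at h
  exact List.append_inj h (by simp)

theorem factor_eq_map_iff (e : α → α) (x N : ℕ) :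
    factor a x N = (factor a 0 N).map e ↔ ∀ p < N, a (x + p) = e (a p) := by
  simp [factor, List.map_inj_left]

theorem factor_palindrome_iff (x y : ℕ) :
    (factor a x y).Palindrome ↔ ∀ i j, i + j + 1 = y → a (x + i) = a (x + j) := by
  rw [List.Palindrome.iff_reverse_eq, List.ext_getElem_iff]
  simp only [List.length_reverse, List.getElem_reverse, factor, List.getElem_map,
    List.getElem_range, List.length_map, List.length_range, true_and]
  refine ⟨fun h i j hij => ?_, fun h i hi _ => h _ _ (by omega)⟩
  rw [← h j (by omega) (by omega), show y - 1 - j = i by omega]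

end Factor

section ClassC

def IsMirrorBlock (a : ℕ → α) (z : ℕ) : Prop :=
  a (4 * z + 3) = a (4 * z) ∧ a (4 * z + 2) = a (4 * z + 1) ∧ a (4 * z) ≠ a (4 * z + 1)

variable {a : ℕ → α}

theorem isMirrorBlock_iff_of_equiv (e : α ≃ α) {z z' : ℕ}
    (h : ∀ j < 4, a (4 * z + j) = e (a (4 * z' + j))) :
    IsMirrorBlock a z ↔ IsMirrorBlock a z' := by
  have h0 := h 0 (by norm_num)
  simp only [Nat.add_zero] at h0
  simp only [IsMirrorBlock, h0, h 1 (by norm_num), h 2 (by norm_num), h 3 (by norm_num),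
    ne_eq, e.apply_eq_iff_eq]

theorem factor_four_mul (N : ℕ) :
    factor a 0 (4 * N) =
      factor a 0 N ++ factor a N N ++ factor a (2 * N) N ++ factor a (3 * N) N := by
  rw [show 4 * N = N + N + N + N by ring, factor_add, factor_add, factor_add]
  ring_nf

theorem exists_equiv_apply_add_of_factor_four_mul {g : α ≃ α} {N : ℕ}
    (h : factor a 0 (4 * N) = factor a 0 N ++ (factor a 0 N).map g ++ (factor a 0 N).map g
      ++ factor a 0 N) {k : ℕ} (hk : k < 4) :
    ∃ e : α ≃ α, ∀ p < N, a (k * N + p) = e (a p) := by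
  rw [factor_four_mul] at h
  obtain ⟨h', h3⟩ := List.append_inj h (by simp)
  obtain ⟨h', h2⟩ := List.append_inj h' (by simp)
  obtain ⟨-, h1⟩ := List.append_inj h' (by simp)
  interval_cases k
  · exact ⟨.refl α, by simp⟩
  · exact ⟨g, by simpa using (factor_eq_map_iff a g N N).1 h1⟩
  · exact ⟨g, (factor_eq_map_iff a g _ N).1 h2⟩
  · exact ⟨.refl α, (factor_eq_map_iff a id _ N).1 (by simpa using h3)⟩

theorem isMirrorBlock_of_self_similar {N : ℕ}
    (hself : ∀ k < 4, ∃ e : α ≃ α, ∀ p < 4 * N, a (k * (4 * N) + p) = e (a p))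
    (hN : ∀ z < N, IsMirrorBlock a z) {z : ℕ} (hz : z < 4 * N) : IsMirrorBlock a z := by
  have hpos : 0 < N := by omega
  obtain ⟨e, he⟩ := hself (z / N) (by rw [Nat.div_lt_iff_lt_mul hpos]; lia)
  refine (isMirrorBlock_iff_of_equiv e fun j hj => ?_).2 (hN (z % N) (Nat.mod_lt _ hpos))
  have hdiv := Nat.div_add_mod z N
  have hmod := Nat.mod_lt z hpos
  rw [← he _ (by omega)]
  congr 1
  linarith

theorem InC.isMirrorBlock (hC : InC a) (z : ℕ) : IsMirrorBlock a z := by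
  obtain ⟨c, g, w, h0, hrec, hne, hpre⟩ := hC
  have hw : ∀ n, w n = factor a 0 (4 ^ n) := fun n => by simp [hpre, factor]
  have hself : ∀ n, ∀ k < 4, ∃ e : α ≃ α, ∀ p < 4 ^ n, a (k * 4 ^ n + p) = e (a p) :=
    fun n k hk => exists_equiv_apply_add_of_factor_four_mul
      (by rw [← pow_succ', ← hw, ← hw, hrec]) hk
  suffices ∀ n, ∀ z < 4 ^ n, IsMirrorBlock a z from this z _ (Nat.lt_pow_self (by norm_num))
  intro n
  induction n with
  | zero =>
    intro z hz
    obtain rfl : z = 0 := by simpa using hz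
    have h1 := hpre 1
    have hc := hne 0
    simp only [hrec, h0, List.map_cons, List.map_nil, List.cons_append, List.nil_append, pow_one,
      List.range_succ, List.range_zero, List.cons.injEq, and_true, ne_eq] at h1 hc
    obtain ⟨rfl, h1, h2, h3⟩ := h1
    exact ⟨h3.symm, h2.symm.trans h1, h1 ▸ Ne.symm hc⟩
  | succ n ih =>
    intro z hz
    rw [pow_succ'] at hz
    exact isMirrorBlock_of_self_similar (by simpa only [pow_succ'] using hself (n + 1)) ih hz

end ClassC

section MirrorBlocks

variable {a : ℕ → α} (hB : ∀ z, IsMirrorBlock a z)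
include hB

theorem apply_eq_of_mirror {p q : ℕ} (hdiv : p / 4 = q / 4) (hmod : p % 4 + q % 4 = 3) :
    a p = a q := by
  obtain ⟨h3, h2, -⟩ := hB (p / 4)
  have hr : p % 4 < 4 := Nat.mod_lt p (by norm_num)
  rw [← Nat.div_add_mod p 4, ← Nat.div_add_mod q 4, ← hdiv, show q % 4 = 3 - p % 4 by omega]
  interval_cases p % 4
  exacts [h3.symm, h2.symm, h2, h3]

theorem apply_ne_apply_succ {p : ℕ} (hp : p % 2 = 0) : a p ≠ a (p + 1) := by
  obtain ⟨-, h2, hne⟩ := hB (p / 4)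
  rcases (by omega : p % 4 = 0 ∨ p % 4 = 2) with h | h
  · rwa [show p = 4 * (p / 4) by omega]
  · rw [show p = 4 * (p / 4) + 2 by omega, h2, show 4 * (p / 4) + 2 + 1 = 4 * (p / 4) + 3 by omega,
      (hB (p / 4)).1]
    exact hne.symm

theorem factor_palindrome_length_le_three_of_odd {x y : ℕ} (hpal : (factor a x y).Palindrome)
    (hy : y % 2 = 1) : y ≤ 3 := by
  by_contra! hlong
  rw [factor_palindrome_iff] at hpal
  set p := x + (y - 1) / 2
  have h1 : a (p - 1) = a (p + 1) := by
    convert hpal ((y - 1) / 2 - 1) ((y - 1) / 2 + 1) (by omega) using 2 <;> omega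
  have h2 : a (p - 2) = a (p + 2) := by
    convert hpal ((y - 1) / 2 - 2) ((y - 1) / 2 + 2) (by omega) using 2 <;> omega
  have mirror : ∀ {i j}, i / 4 = j / 4 → i % 4 + j % 4 = 3 → a i = a j :=
    apply_eq_of_mirror hB
  -- whatever `p % 4` is, a block symmetry turns `h1`, `h2` into equal adjacent letters at an
  -- even position
  rcases (by omega : p % 4 = 0 ∨ p % 4 = 1 ∨ p % 4 = 2 ∨ p % 4 = 3) with h | h | h | h
  · refine apply_ne_apply_succ hB (p := p - 2) (by omega) ?_
    rw [h2, ← mirror (i := p + 1) (by omega) (by omega), ← h1]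
    congr 1; omega
  · refine apply_ne_apply_succ hB (p := p - 1) (by omega) ?_
    rw [h1, mirror (i := p + 1) (j := p) (by omega) (by omega)]
    congr 1; omega
  · refine apply_ne_apply_succ hB (p := p) (by omega) ?_
    rw [← mirror (i := p - 1) (by omega) (by omega), h1]
  · refine apply_ne_apply_succ hB (p := p + 1) (by omega) ?_
    rw [← h1, mirror (i := p - 1) (j := p - 2) (by omega) (by omega), h2]

theorem factor_palindrome_center_even {x y : ℕ} (hpal : (factor a x y).Palindrome)
    (hy : y % 2 = 0) (hy2 : 2 ≤ y) : (2 * x + y) % 4 = 0 := by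
  rw [factor_palindrome_iff] at hpal
  have h := hpal (y / 2 - 1) (y / 2) (by omega)
  by_contra hodd
  refine apply_ne_apply_succ hB (p := x + (y / 2 - 1)) (by omega) ?_
  rw [h]
  congr 1; omega

theorem factor_palindrome_extend {x y m : ℕ} (hpal : (factor a x y).Palindrome) (hy : 4 ≤ y)
    (hc : (2 * x + y) % 4 = 0) (hxm : x ≤ 4 * m + 2) (hmx : 8 * m ≤ 2 * x + y) :
    (factor a (4 * m) (2 * x + y - 8 * m)).Palindrome := by
  rw [factor_palindrome_iff] at hpal ⊢
  intro i j hij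
  wlog hle : i ≤ j generalizing i j
  · exact (this j i (by omega) (by omega)).symm
  by_cases hi : x ≤ 4 * m + i
  · convert hpal (4 * m + i - x) (4 * m + j - x) (by omega) using 2 <;> omega
  -- `4 * m + i` lies left of the palindrome: mirror it inside its block, reflect about the even
  -- centre (which maps blocks onto blocks, reversed), and mirror back
  · calc a (4 * m + i) = a (4 * m + (3 - i)) := apply_eq_of_mirror hB (by omega) (by omega)
      _ = a (4 * m + (j - 3 + 2 * i)) := by
        convert hpal (4 * m + (3 - i) - x) (4 * m + (j - 3 + 2 * i) - x) (by omega) using 2 <;>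
          omega
      _ = a (4 * m + j) := apply_eq_of_mirror hB (by omega) (by omega)

variable {f : α × α × α × α ≃ β} {b : ℕ → β}
  (hb : ∀ n, b n = f (a (4 * n), a (4 * n + 1), a (4 * n + 2), a (4 * n + 3)))
include hb

theorem factor_palindrome_of_factor_four_mul {m r : ℕ}
    (hpal : (factor a (4 * m) (4 * r)).Palindrome) : (factor b m r).Palindrome := by
  rw [factor_palindrome_iff] at hpal ⊢
  intro i j hij
  have hblock : ∀ s < 4, a (4 * (m + i) + s) = a (4 * (m + j) + s) := fun s hs =>
    calc a (4 * (m + i) + s) = a (4 * (m + j) + (3 - s)) := by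
          convert hpal (4 * i + s) (4 * j + (3 - s)) (by omega) using 2 <;> ring_nf
      _ = a (4 * (m + j) + s) := apply_eq_of_mirror hB (by omega) (by omega)
  rw [hb, hb, hblock 1 (by norm_num), hblock 2 (by norm_num), hblock 3 (by norm_num)]
  simpa using hblock 0 (by norm_num)

theorem exists_factor_palindrome_near {x y m : ℕ} (hpal : (factor a x y).Palindrome)
    (hmx : 4 * m ≤ x + 2) (hxm : x ≤ 4 * m + 2) :
    ∃ r, 4 * (m + r) ≤ x + y + 2 ∧ x + y ≤ 4 * (m + r) + 2 ∧ (factor b m r).Palindrome := by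
  rcases le_or_gt y 3 with hy | hy
  · by_cases hnear : x + y ≤ 4 * m + 2
    · exact ⟨0, by omega, by omega, by simpa [factor] using .nil⟩
    · exact ⟨1, by omega, by omega, by simpa [factor] using .singleton _⟩
  · have heven : y % 2 = 0 := by
      by_contra h
      have := factor_palindrome_length_le_three_of_odd hB hpal (by omega)
      omega
    have hc := factor_palindrome_center_even hB hpal heven (by omega)
    refine ⟨(2 * x + y - 8 * m) / 4, by omega, by omega, ?_⟩
    refine factor_palindrome_of_factor_four_mul hB hb ?_
    rw [show 4 * ((2 * x + y - 8 * m) / 4) = 2 * x + y - 8 * m by omega]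
    exact factor_palindrome_extend hB hpal (by omega) hc hxm (by omega)

theorem exists_palLen_factor_le_length (ps : List (List α)) (hps : ∀ p ∈ ps, p.Palindrome)
    {L : ℕ} (hL : ps.flatten = factor a 0 L) :
    ∃ m, 4 * m ≤ L + 2 ∧ L ≤ 4 * m + 2 ∧ palLen (factor b 0 m) ≤ ps.length := by
  induction ps using List.reverseRecOn generalizing L with
  | nil =>
    obtain rfl : L = 0 := by simpa using (congrArg List.length hL).symm
    exact ⟨0, by omega, by omega, by simpa [factor] using palLen_flatten_le ([] : List (List β))⟩
  | append_singleton qs p ih =>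
    simp only [List.flatten_append, List.flatten_singleton] at hL
    obtain ⟨hqs, hp⟩ := factor_eq_of_append_eq a hL
    have hL' : L = qs.flatten.length + p.length := by simpa using (congrArg List.length hL).symm
    obtain ⟨m, hm1, hm2, hlen⟩ := ih (fun q hq => hps q (by simp [hq])) hqs
    rw [zero_add] at hp
    obtain ⟨r, hr1, hr2, hpal⟩ := exists_factor_palindrome_near hB hb
      (hp ▸ hps p (by simp)) hm1 hm2
    refine ⟨m + r, by omega, by omega, ?_⟩
    calc palLen (factor b 0 (m + r)) ≤ palLen (factor b 0 m) + 1 := by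
          rw [factor_add, zero_add]; exact palLen_append_le_succ _ hpal
      _ ≤ (qs ++ [p]).length := by simpa using hlen

theorem palLen_factor_le_palLen_factor_four_mul (n : ℕ) :
    palLen (factor b 0 n) ≤ palLen (factor a 0 (4 * n)) := by
  obtain ⟨ps, hlen, hps, hflat⟩ := exists_palindromes_length_eq_palLen (factor a 0 (4 * n))
  obtain ⟨m, hm1, hm2, hle⟩ := exists_palLen_factor_le_length hB hb ps hps hflat
  obtain rfl : m = n := by omega
  exact hlen ▸ hle

theorem factor_four_mul_eq_flatMap (n : ℕ) :
    factor a 0 (4 * n) =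
      (factor b 0 n).flatMap
        fun s => [(f.symm s).1, (f.symm s).2.1, (f.symm s).2.1, (f.symm s).1] := by
  induction n with
  | zero => simp [factor]
  | succ n ih =>
    obtain ⟨h3, h2, -⟩ := hB n
    rw [factor_add, Nat.mul_succ, factor_add, ih, List.flatMap_append]
    simp [factor, hb, List.range_succ, h2, h3]

end MirrorBlocks

end

theorem stmt8 {α β : Type*} (a : ℕ → α) (hC : InC a)
    (f : α × α × α × α ≃ β) (b : ℕ → β)
    (hb : ∀ n, b n = f (a (4 * n), a (4 * n + 1), a (4 * n + 2), a (4 * n + 3))) :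
    ∀ n : ℕ, P b n = P a (4 * n) := by
  intro n
  have hB := hC.isMirrorBlock
  refine le_antisymm (palLen_factor_le_palLen_factor_four_mul hB hb n) ?_
  rw [P, prefixWord, factor_four_mul_eq_flatMap hB hb]
  exact palLen_flatMap_le _ (fun s => by simp [List.Palindrome.iff_reverse_eq]) _
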